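/- Let ρ ≥ 2, let v : Fin (ρ−1) → (Fin ρ → ℝ) be a linearly independent family, let h : Fin ρ → ℝ not lie in the linear span of the v i, and let w : (Fin ρ → ℝ) →ₗ[ℝ] ℝ be a linear functional with w (v i) > 0 for all i. Fix δ₀ > 0 such that w ((∑ i, v i) + δ₀ • h) > 0. For δ ∈ (0, δ₀], let K_δ be the set of all vectors of the form (∑ i, (c i) • v i) + t • ((∑ i, v i) + δ • h) with c i ≥ 0 for all i and t ≥ 0. Then the Lebesgue integral ∫_{K_δ} exp(−w y) dy tends to 0 as δ → 0 from the right; in particular, for every ε > 0 there exists δ ∈ (0, δ₀] with ∫_{K_δ} exp(−w y) dy ≤ ε. -/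

import Mathlib

open MeasureTheory Filter Topology Module

/-!
The cones `K δ` grow with `δ`, and `exp (-w)` is integrable on `K δ₀`: in the coordinates of
its generators `v, ∑ v + δ₀ h`, on which `w` is positive, the integrand is a product of decaying
exponentials over an orthant. In the coordinates of the basis `(h, v)` a point
`∑ cᵢ vᵢ + t (∑ v + δ h)` has `h`-coordinate `t δ` and `vᵢ`-coordinates `cᵢ + t ≥ t`, so
`|h-coordinate| ≤ |δ| · (vᵢ-coordinate)`. Hence every point off the null hyperplane
`{h-coordinate = 0}` leaves `K δ` for small `δ`, and dominated convergence gives the limit.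
-/

section BasisOption

variable {K E : Type*} [Field K] [AddCommGroup E] [Module K E] {ι : Type*} [Fintype ι]
  {v : ι → E} (hv : LinearIndependent K v) {u : E} (hu : u ∉ Submodule.span K (Set.range v))
  (hcard : finrank K E = Fintype.card ι + 1)

noncomputable def LinearIndependent.basisOption : Basis (Option ι) K E :=
  basisOfLinearIndependentOfCardEqFinrank (hv.option hu) (by simp [hcard])

@[simp]
theorem LinearIndependent.basisOption_none : hv.basisOption hu hcard none = u := by
  simp [LinearIndependent.basisOption]

@[simp]
theorem LinearIndependent.basisOption_some (i : ι) : hv.basisOption hu hcard (some i) = v i := by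
  simp [LinearIndependent.basisOption]

end BasisOption

section Cone

variable {E : Type*} [AddCommGroup E] [Module ℝ E] {ι : Type*} [Fintype ι]

theorem sum_add_smul_notMem_span {v : ι → E} {h : E} (hh : h ∉ Submodule.span ℝ (Set.range v))
    {δ : ℝ} (hδ : δ ≠ 0) : (∑ i, v i) + δ • h ∉ Submodule.span ℝ (Set.range v) := by
  rwa [Submodule.add_mem_iff_right _
    (Submodule.sum_mem _ fun i _ => Submodule.subset_span (Set.mem_range_self i)),
    Submodule.smul_mem_iff _ hδ]

def simplicialCone (v : ι → E) (u : E) : Set E :=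
  {y | ∃ c : ι → ℝ, ∃ t : ℝ, (∀ i, 0 ≤ c i) ∧ 0 ≤ t ∧ y = (∑ i, c i • v i) + t • u}

theorem simplicialCone_sum_add_smul_mono (v : ι → E) (h : E) {δ δ' : ℝ} (hδ : 0 ≤ δ)
    (hδδ' : δ ≤ δ') :
    simplicialCone v ((∑ i, v i) + δ • h) ⊆ simplicialCone v ((∑ i, v i) + δ' • h) := by
  rintro y ⟨c, t, hc, ht, rfl⟩
  -- `t (∑ v + δ h) = (t - s) ∑ v + s (∑ v + δ' h)` with `s = t δ / δ'`
  have hs : δ / δ' ≤ 1 := div_le_one_of_le₀ hδδ' (hδ.trans hδδ')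
  refine ⟨fun i => c i + t * (1 - δ / δ'), t * (δ / δ'),
    fun i => add_nonneg (hc i) (mul_nonneg ht (sub_nonneg.2 hs)),
    mul_nonneg ht (div_nonneg hδ (hδ.trans hδδ')), ?_⟩
  have hδ' : δ / δ' * δ' = δ := div_mul_cancel_of_imp fun h0 => by linarith
  simp only [add_smul, Finset.sum_add_distrib, ← Finset.smul_sum, smul_add, smul_smul]
  rw [mul_assoc, hδ']
  module

theorem Module.Basis.equivFun_sum_smul_add_smul (b : Basis (Option ι) ℝ E) {v : ι → E} {u : E}
    (hv : ∀ i, b (some i) = v i) (hu : b none = u) (c : ι → ℝ) (t : ℝ) :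
    b.equivFun ((∑ i, c i • v i) + t • u) = fun o => o.elim t c := by
  rw [← b.equivFun.apply_symm_apply (fun o => o.elim t c), b.equivFun_symm_apply,
    Fintype.sum_option]
  simp [hv, hu, add_comm]

theorem Module.Basis.simplicialCone_eq (b : Basis (Option ι) ℝ E) {v : ι → E} {u : E}
    (hv : ∀ i, b (some i) = v i) (hu : b none = u) :
    simplicialCone v u = {y | ∀ o, 0 ≤ b.equivFun y o} := by
  ext y
  constructor
  · rintro ⟨c, t, hc, ht, rfl⟩ o
    rw [b.equivFun_sum_smul_add_smul hv hu]
    cases o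
    exacts [ht, hc _]
  · intro hy
    refine ⟨fun i => b.equivFun y (some i), b.equivFun y none, fun i => hy _, hy _, ?_⟩
    apply b.equivFun.injective
    rw [b.equivFun_sum_smul_add_smul hv hu]
    ext o
    cases o <;> rfl

theorem Module.Basis.abs_equivFun_none_le (b : Basis (Option ι) ℝ E) {v : ι → E} {h : E}
    (hv : ∀ i, b (some i) = v i) (hh : b none = h) {δ : ℝ} {y : E}
    (hy : y ∈ simplicialCone v ((∑ i, v i) + δ • h)) (i : ι) :
    |b.equivFun y none| ≤ |δ| * b.equivFun y (some i) := by
  obtain ⟨c, t, hc, ht, rfl⟩ := hy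
  have hy : (∑ i, c i • v i) + t • ((∑ i, v i) + δ • h)
      = (∑ i, (c i + t) • v i) + (t * δ) • h := by
    simp only [add_smul, Finset.sum_add_distrib, ← Finset.smul_sum, smul_add, smul_smul]
    abel
  rw [hy, b.equivFun_sum_smul_add_smul hv hh]
  simp only [Option.elim_none, Option.elim_some, abs_mul, abs_of_nonneg ht]
  nlinarith [hc i, abs_nonneg δ]

theorem Module.Basis.eventually_notMem_simplicialCone (b : Basis (Option ι) ℝ E) {v : ι → E}
    {h : E} (hv : ∀ i, b (some i) = v i) (hh : b none = h) [Nonempty ι] {y : E}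
    (hy : b.equivFun y none ≠ 0) :
    ∀ᶠ δ in 𝓝 (0 : ℝ), y ∉ simplicialCone v ((∑ i, v i) + δ • h) := by
  obtain ⟨i⟩ := ‹Nonempty ι›
  have hlim : Tendsto (fun δ : ℝ => |δ| * b.equivFun y (some i)) (𝓝 0) (𝓝 0) := by
    simpa using (continuous_abs.tendsto 0).mul_const (b.equivFun y (some i))
  filter_upwards [hlim.eventually (gt_mem_nhds (abs_pos.2 hy))] with δ hδ hmem
  exact (b.abs_equivFun_none_le hv hh hmem i).not_gt hδ

end Cone

theorem tendsto_setIntegral_of_eventually_notMem {α ι G : Type*} [MeasurableSpace α]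
    [NormedAddCommGroup G] [NormedSpace ℝ G] {μ : Measure α} {l : Filter ι}
    [l.IsCountablyGenerated] {s : ι → Set α} {t : Set α} {f : α → G}
    (hs : ∀ᶠ i in l, MeasurableSet (s i) ∧ s i ⊆ t) (hf : IntegrableOn f t μ)
    (hlim : ∀ᵐ x ∂μ, ∀ᶠ i in l, x ∉ s i) :
    Tendsto (fun i => ∫ x in s i, f x ∂μ) l (𝓝 0) := by
  have hind : Tendsto (fun i => ∫ x in t, (s i).indicator f x ∂μ) l (𝓝 (∫ _ in t, (0 : G) ∂μ)) :=
    tendsto_integral_filter_of_dominated_convergence (fun x => ‖f x‖)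
      (hs.mono fun i hi => hf.aestronglyMeasurable.indicator hi.1)
      (Eventually.of_forall fun i => Eventually.of_forall fun x => norm_indicator_le_norm_self _ _)
      hf.norm
      (ae_restrict_of_ae (hlim.mono fun x hx => tendsto_const_nhds.congr' <|
        hx.mono fun i hi => (Set.indicator_of_notMem hi f).symm))
  rw [integral_zero] at hind
  refine hind.congr' (hs.mono fun i hi => ?_)
  rw [setIntegral_indicator hi.1, Set.inter_eq_right.2 hi.2]

section Haar

variable {E : Type*} [NormedAddCommGroup E] [NormedSpace ℝ E] [FiniteDimensional ℝ E]
  [MeasurableSpace E] [BorelSpace E] {κ : Type*} [Fintype κ]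

theorem Module.Basis.measurableSet_setOf_equivFun_nonneg (b : Basis κ ℝ E) :
    MeasurableSet {y | ∀ k, 0 ≤ b.equivFun y k} := by
  simp only [Set.ofPred_forall]
  exact MeasurableSet.iInter fun k => measurableSet_le measurable_const
    ((LinearMap.proj k ∘ₗ b.equivFun.toLinearMap).continuous_of_finiteDimensional.measurable)

variable (μ : Measure E) [μ.IsAddHaarMeasure]

theorem Module.Basis.ae_equivFun_ne_zero (b : Basis κ ℝ E) (k : κ) :
    ∀ᵐ y ∂μ, b.equivFun y k ≠ 0 := by
  have hker : LinearMap.ker (b.coord k) ≠ ⊤ := fun htop => by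
    simpa using LinearMap.congr_fun (LinearMap.ker_eq_top.1 htop) (b k)
  filter_upwards [measure_eq_zero_iff_ae_notMem.1 (Measure.addHaar_submodule μ _ hker)] with y hy
  simpa using hy

theorem Module.Basis.integrableOn_exp_neg (b : Basis κ ℝ E) {w : E →ₗ[ℝ] ℝ}
    (hw : ∀ k, 0 < w (b k)) :
    IntegrableOn (fun y => Real.exp (-w y)) {y | ∀ k, 0 ≤ b.equivFun y k} μ := by
  set L := b.equivFunL.symm
  set e := L.toHomeomorph.toMeasurableEquiv
  have hL (x : κ → ℝ) : L x = b.equivFun.symm x := rfl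
  rw [Measure.isAddLeftInvariant_eq_smul μ (volume.map L), IntegrableOn, Measure.restrict_smul]
  refine Integrable.smul_measure_nnreal ?_
  rw [← IntegrableOn, show (⇑L : (κ → ℝ) → E) = e from rfl, integrableOn_map_equiv]
  have hpre : e ⁻¹' {y | ∀ k, 0 ≤ b.equivFun y k}
      = Set.univ.pi fun _ => Set.Ici 0 := by
    ext x
    simp only [e, Homeomorph.toMeasurableEquiv_coe, ContinuousLinearEquiv.coe_toHomeomorph, hL,
      Set.mem_preimage, Set.mem_ofPred_eq, LinearEquiv.apply_symm_apply, Set.mem_univ_pi,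
      Set.mem_Ici]
  have hcomp : (fun y => Real.exp (-w y)) ∘ e
      = fun x => ∏ k, Real.exp (-w (b k) * x k) := by
    ext x
    simp [e, hL, b.equivFun_symm_apply, ← Real.exp_sum, ← Finset.sum_neg_distrib, mul_comm]
  rw [hpre, hcomp, IntegrableOn, volume_pi, Measure.restrict_pi_pi]
  exact Integrable.fintype_prod fun k =>
    (integrableOn_Ici_iff_integrableOn_Ioi).2 (exp_neg_integrableOn_Ioi 0 (hw k))

end Haar

theorem stmt_10 (ρ : ℕ) (hρ : 2 ≤ ρ) (v : Fin (ρ - 1) → (Fin ρ → ℝ))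
    (hv : LinearIndependent ℝ v)
    (h : Fin ρ → ℝ) (hh : h ∉ Submodule.span ℝ (Set.range v))
    (w : (Fin ρ → ℝ) →ₗ[ℝ] ℝ) (hw : ∀ i, 0 < w (v i))
    (δ₀ : ℝ) (hδ₀ : 0 < δ₀) (hwδ : 0 < w ((∑ i, v i) + δ₀ • h))
    (Kδ : ℝ → Set (Fin ρ → ℝ))
    (hKδ : ∀ δ, Kδ δ = {y | ∃ c : Fin (ρ - 1) → ℝ, ∃ t : ℝ,
      (∀ i, 0 ≤ c i) ∧ 0 ≤ t ∧ y = (∑ i, c i • v i) + t • ((∑ i, v i) + δ • h)}) :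
    Tendsto (fun δ : ℝ => ∫ y in Kδ δ, Real.exp (-(w y)))
      (nhdsWithin 0 (Set.Ioc 0 δ₀)) (nhds 0) ∧
    ∀ ε > (0 : ℝ), ∃ δ ∈ Set.Ioc (0 : ℝ) δ₀,
      (∫ y in Kδ δ, Real.exp (-(w y))) ≤ ε := by
  have : Nonempty (Fin (ρ - 1)) := ⟨⟨0, by omega⟩⟩
  have hcard : finrank ℝ (Fin ρ → ℝ) = Fintype.card (Fin (ρ - 1)) + 1 := by simp; omega
  have hK (δ : ℝ) : Kδ δ = simplicialCone v ((∑ i, v i) + δ • h) := hKδ δ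
  have hKeq (δ : ℝ) (hδ : δ ≠ 0) : Kδ δ = {y | ∀ o, 0 ≤
      (hv.basisOption (sum_add_smul_notMem_span hh hδ) hcard).equivFun y o} := by
    rw [hK]
    exact Module.Basis.simplicialCone_eq _ (by simp) (by simp)
  have hint : IntegrableOn (fun y => Real.exp (-w y)) (Kδ δ₀) := by
    rw [hKeq δ₀ hδ₀.ne']
    refine Module.Basis.integrableOn_exp_neg _ _ fun o => ?_
    cases o
    exacts [by simpa using hwδ, by simpa using hw _]
  have hsub : ∀ᶠ δ in nhdsWithin 0 (Set.Ioc 0 δ₀), MeasurableSet (Kδ δ) ∧ Kδ δ ⊆ Kδ δ₀ := by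
    filter_upwards [eventually_mem_nhdsWithin] with δ ⟨hδ, hδδ₀⟩
    refine ⟨hKeq δ hδ.ne' ▸ Module.Basis.measurableSet_setOf_equivFun_nonneg _, ?_⟩
    rw [hK, hK]
    exact simplicialCone_sum_add_smul_mono v h hδ.le hδδ₀
  have hae : ∀ᵐ y, ∀ᶠ δ in nhdsWithin 0 (Set.Ioc 0 δ₀), y ∉ Kδ δ := by
    filter_upwards [(hv.basisOption hh hcard).ae_equivFun_ne_zero volume none] with y hy
    simp only [hK]
    exact ((hv.basisOption hh hcard).eventually_notMem_simplicialCone (by simp) (by simp)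
      hy).filter_mono nhdsWithin_le_nhds
  have hlim := tendsto_setIntegral_of_eventually_notMem hsub hint hae
  refine ⟨hlim, fun ε hε => ?_⟩
  have := left_nhdsWithin_Ioc_neBot hδ₀
  obtain ⟨δ, hδε, hδ⟩ := ((hlim.eventually (gt_mem_nhds hε)).and eventually_mem_nhdsWithin).exists
  exact ⟨δ, hδ, hδε.le⟩
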